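/- arXiv:1710.05185 — 6 statements merged into one kernel-verified Lean document; each statement's English description precedes it below -/
import Mathlib

section
/- Let H be a horizontal trajectory with n ≥ 1 edges, each of positive length (i.e., (p_{i−1}).1 ≠ (p_i).1 for all 1 ≤ i ≤ n), and fix a side length s > 0. Then there exist (x, y) ∈ ℝ² and an index j ∈ {0, …, n} such that w_H(x, y) = h(H), the x-coordinate (p_j).1 of the vertex p_j equals x or x + s, and y ≤ (p_j).2 ≤ y + s; that is, some square of maximum weight has a vertex of H on one of its two closed vertical sides. -/
open MeasureTheory Set
open scoped ENNReal

/-- `Square s x y` is the axis-parallel square `[x, x+s] × [y, y+s]`. -/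
def Square (s x y : ℝ) : Set (ℝ × ℝ) := Icc x (x + s) ×ˢ Icc y (y + s)

/-- The weight of `Square s x y` with respect to a trajectory `T` on `[t0, tn]`:
the Lebesgue measure of `{t ∈ [t0, tn] : T t ∈ Square s x y}`. -/
noncomputable def wgt (s t0 tn : ℝ) (T : ℝ → ℝ × ℝ) (x y : ℝ) : ℝ≥0∞ :=
  volume {τ ∈ Icc t0 tn | T τ ∈ Square s x y}

/-!
On a horizontal edge the trajectory moves at constant speed, so the time it spends in
`Square s x y` is the length of `[x, x + s] ∩ [a, b]` divided by that speed, provided the height of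
the edge lies in `[y, y + s]`. For fixed `y` the weight is thus a function of `x` which is convex
between consecutive abscissae `(p j).1` and `(p j).1 - s` (over vertices `p j` at heights in
`[y, y + s]`) and vanishes outside them, so it is maximised at one of them: with a vertex on a
vertical side of the square. Raising `y` to the lowest vertex height in `[y, y + s]` loses no edge,
so finitely many squares dominate all others and the supremum is attained among them.
-/

theorem Set.Finite.exists_mem_eq_iSup {α β : Type*} [Nonempty α] [CompleteLinearOrder β]
    {f : α → β} {C : Set α} (hC : C.Finite) (hdom : ∀ a, ∃ c ∈ C, f a ≤ f c) :
    ∃ c ∈ C, f c = ⨆ a, f a := by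
  obtain ⟨c₀, hc₀, -⟩ := hdom (Classical.arbitrary α)
  obtain ⟨c, hc, hmax⟩ := Set.exists_max_image C f hC ⟨c₀, hc₀⟩
  refine ⟨c, hc, le_antisymm (le_iSup f c) (iSup_le fun a => ?_)⟩
  obtain ⟨c', hc', hle⟩ := hdom a
  exact hle.trans (hmax c' hc')

theorem Set.Finite.exists_mem_Icc_forall_notMem_Ioo {α : Type*} [LinearOrder α] {K : Set α}
    (hK : K.Finite) {x : α} (hl : ∃ k ∈ K, k ≤ x) (hr : ∃ k ∈ K, x ≤ k) :
    ∃ c ∈ K, ∃ d ∈ K, x ∈ Icc c d ∧ ∀ k ∈ K, k ∉ Ioo c d := by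
  obtain ⟨c, ⟨hcK, hcx⟩, hc⟩ :=
    Set.exists_max_image {k ∈ K | k ≤ x} id (hK.subset (sep_subset _ _)) hl
  obtain ⟨d, ⟨hdK, hxd⟩, hd⟩ :=
    Set.exists_min_image {k ∈ K | x ≤ k} id (hK.subset (sep_subset _ _)) hr
  refine ⟨c, hcK, d, hdK, ⟨hcx, hxd⟩, fun k hk hkcd => ?_⟩
  rcases le_total k x with hkx | hxk
  · exact (hc k ⟨hk, hkx⟩).not_gt hkcd.1
  · exact (hd k ⟨hk, hxk⟩).not_gt hkcd.2

theorem Set.Finite.exists_mem_forall_le_of_convexOn_gaps {K : Set ℝ} (hK : K.Finite)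
    (hne : K.Nonempty) {g : ℝ → ℝ}
    (hconv : ∀ c ∈ K, ∀ d ∈ K, (∀ k ∈ K, k ∉ Ioo c d) → ConvexOn ℝ (Icc c d) g)
    (hleft : ∀ x, (∀ k ∈ K, x ≤ k) → g x = 0) (hright : ∀ x, (∀ k ∈ K, k ≤ x) → g x = 0) :
    ∃ k ∈ K, ∀ x, g x ≤ g k := by
  obtain ⟨k₀, hk₀, hmax⟩ := Set.exists_max_image K g hK hne
  obtain ⟨M, hM, hMmax⟩ := Set.exists_max_image K id hK hne
  have hk₀_nonneg : 0 ≤ g k₀ := hright M hMmax ▸ hmax M hM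
  refine ⟨k₀, hk₀, fun x => ?_⟩
  by_cases hl : ∃ k ∈ K, k ≤ x
  · by_cases hr : ∃ k ∈ K, x ≤ k
    · obtain ⟨c, hc, d, hd, hx, hgap⟩ := hK.exists_mem_Icc_forall_notMem_Ioo hl hr
      have hconv := hconv c hc d hd hgap
      calc g x ≤ max (g c) (g d) :=
            hconv.le_max_of_mem_Icc (left_mem_Icc.2 (hx.1.trans hx.2))
              (right_mem_Icc.2 (hx.1.trans hx.2)) hx
        _ ≤ g k₀ := max_le (hmax c hc) (hmax d hd)
    · push Not at hr
      rw [hright x fun k hk => (hr k hk).le]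
      exact hk₀_nonneg
  · push Not at hl
    rw [hleft x fun k hk => (hl k hk).le]
    exact hk₀_nonneg

theorem MeasureTheory.measure_Icc_inter_eq_sum {μ : Measure ℝ} [NullSingletonClass μ] :
    ∀ {n : ℕ} {t : Fin (n + 1) → ℝ}, Monotone t → ∀ E : Set ℝ,
      (∀ i : Fin n, NullMeasurableSet (Icc (t i.castSucc) (t i.succ) ∩ E) μ) →
      μ (Icc (t 0) (t (Fin.last n)) ∩ E) = ∑ i : Fin n, μ (Icc (t i.castSucc) (t i.succ) ∩ E)
  | 0, t, _, E, _ => by simpa using measure_mono_null inter_subset_left (measure_singleton (t 0))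
  | n + 1, t, ht, E, hE => by
    have hsplit : Icc (t 0) (t (Fin.last (n + 1))) =
        Icc (t 0) (t (Fin.last n).castSucc) ∪ Icc (t (Fin.last n).castSucc) (t (Fin.last n).succ) :=
      (Icc_union_Icc_eq_Icc (ht (Fin.zero_le _)) (ht (Fin.le_last _))).symm
    have hdisj : AEDisjoint μ (Icc (t 0) (t (Fin.last n).castSucc) ∩ E)
        (Icc (t (Fin.last n).castSucc) (t (Fin.last n).succ) ∩ E) :=
      measure_mono_null (fun τ ⟨⟨⟨_, h₁⟩, _⟩, ⟨⟨h₂, _⟩, _⟩⟩ => le_antisymm h₁ h₂)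
        (measure_singleton _)
    rw [hsplit, union_inter_distrib_right, measure_union₀ (hE (Fin.last n)) hdisj,
      Fin.sum_univ_castSucc]
    congr 1
    have := measure_Icc_inter_eq_sum (t := t ∘ Fin.castSucc)
      (ht.comp Fin.strictMono_castSucc.monotone) E fun i => by
        simpa only [Function.comp_apply, Fin.succ_castSucc] using hE i.castSucc
    simpa only [Function.comp_apply, Fin.succ_castSucc, Fin.castSucc_zero] using this

theorem Real.volume_Icc_inter_preimage_affine {u v a b : ℝ} (huv : u < v) (hab : a ≠ b)
    (S : Set ℝ) :
    volume (Icc u v ∩ (fun τ => a + (τ - u) / (v - u) * (b - a)) ⁻¹' S) =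
      ENNReal.ofReal ((v - u) / |b - a|) * volume (uIcc a b ∩ S) := by
  have hvu : v - u ≠ 0 := sub_ne_zero.2 huv.ne'
  set m := (b - a) / (v - u) with hm_def
  have hm : m ≠ 0 := div_ne_zero (sub_ne_zero.2 hab.symm) hvu
  have hφ : (fun τ => a + (τ - u) / (v - u) * (b - a)) = (· + (a - m * u)) ∘ (m * ·) := by
    ext τ; simp only [Function.comp_apply, hm_def]; field_simp; ring
  have hIcc : Icc u v = (fun τ => a + (τ - u) / (v - u) * (b - a)) ⁻¹' uIcc a b := by
    rw [hφ, preimage_comp, preimage_add_const_uIcc, preimage_const_mul_uIcc hm,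
      ← uIcc_of_le huv.le]
    congr 1 <;> simp only [hm_def] <;> field_simp <;> ring
  rw [hIcc, ← preimage_inter, hφ, preimage_comp, Real.volume_preimage_mul_left hm,
    measure_preimage_add_right, hm_def, inv_div, abs_div, abs_of_pos (sub_pos.2 huv)]

theorem Real.volume_real_uIcc_inter_Icc (a b x s : ℝ) :
    volume.real (uIcc a b ∩ Icc x (x + s)) = max (min (max a b) (x + s) - max (min a b) x) 0 := by
  rw [uIcc, Icc_inter_Icc, Real.volume_real_Icc]

theorem Real.volume_real_uIcc_inter_Icc_eq_zero_of_le {a b x s : ℝ} (ha : a ≤ x) (hb : b ≤ x) :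
    volume.real (uIcc a b ∩ Icc x (x + s)) = 0 := by
  rw [Real.volume_real_uIcc_inter_Icc, max_eq_right]
  linarith [min_le_left (max a b) (x + s), max_le ha hb, le_max_right (min a b) x]

theorem Real.volume_real_uIcc_inter_Icc_eq_zero_of_add_le {a b x s : ℝ} (ha : x + s ≤ a)
    (hb : x + s ≤ b) : volume.real (uIcc a b ∩ Icc x (x + s)) = 0 := by
  rw [Real.volume_real_uIcc_inter_Icc, max_eq_right]
  linarith [min_le_right (max a b) (x + s), le_min ha hb, le_max_left (min a b) x]

theorem exists_affine_eqOn_min_add {c d B : ℝ} (s : ℝ) (hB : B - s ∉ Ioo c d) :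
    ∃ α β : ℝ, ∀ x ∈ Icc c d, min B (x + s) = α * x + β := by
  rcases not_and_or.1 hB with h | h <;> rw [not_lt] at h
  · exact ⟨0, B, fun x hx => by rw [min_eq_left (by linarith [hx.1])]; ring⟩
  · exact ⟨1, s, fun x hx => by rw [min_eq_right (by linarith [hx.2])]; ring⟩

theorem exists_affine_eqOn_max {c d A : ℝ} (hA : A ∉ Ioo c d) :
    ∃ α β : ℝ, ∀ x ∈ Icc c d, max A x = α * x + β := by
  rcases not_and_or.1 hA with h | h <;> rw [not_lt] at h
  · exact ⟨1, 0, fun x hx => by rw [max_eq_right (h.trans hx.1)]; ring⟩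
  · exact ⟨0, A, fun x hx => by rw [max_eq_left (hx.2.trans h)]; ring⟩

theorem Real.convexOn_volume_real_uIcc_inter_Icc {a b s c d : ℝ} (ha : min a b ∉ Ioo c d)
    (hb : max a b - s ∉ Ioo c d) :
    ConvexOn ℝ (Icc c d) fun x => volume.real (uIcc a b ∩ Icc x (x + s)) := by
  obtain ⟨α₁, β₁, h₁⟩ := exists_affine_eqOn_min_add s hb
  obtain ⟨α₂, β₂, h₂⟩ := exists_affine_eqOn_max ha
  have hconv : ConvexOn ℝ univ fun x : ℝ => max ((α₁ - α₂) * x + (β₁ - β₂)) 0 :=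
    (((LinearMap.mulLeft ℝ (α₁ - α₂)).convexOn convex_univ).add_const (β₁ - β₂)).sup
      (convexOn_const 0 convex_univ)
  refine (hconv.subset (subset_univ _) (convex_Icc c d)).congr fun x hx => ?_
  rw [Real.volume_real_uIcc_inter_Icc, h₁ x hx, h₂ x hx]
  dsimp only
  congr 1
  ring

theorem convexOn_finset_sum {𝕜 E β ι : Type*} [Semiring 𝕜] [PartialOrder 𝕜] [AddCommMonoid E]
    [AddCommMonoid β] [PartialOrder β] [IsOrderedAddMonoid β] [SMul 𝕜 E] [Module 𝕜 β]
    {s : Set E} (hs : Convex 𝕜 s) (u : Finset ι) {f : ι → E → β}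
    (hf : ∀ i ∈ u, ConvexOn 𝕜 s (f i)) : ConvexOn 𝕜 s fun x => ∑ i ∈ u, f i x :=
  (Finset.sum_induction f (ConvexOn 𝕜 s) (fun _ _ => ConvexOn.add) (convexOn_const 0 hs)
    hf).congr fun x _ => Finset.sum_apply x u f

def OnVerticalSide (s x y : ℝ) (q : ℝ × ℝ) : Prop :=
  (q.1 = x ∨ q.1 = x + s) ∧ y ≤ q.2 ∧ q.2 ≤ y + s

theorem finite_setOf_onVerticalSide {ι : Type*} [Finite ι] (s y : ℝ) (p : ι → ℝ × ℝ) :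
    {ξ | ∃ j, OnVerticalSide s ξ y (p j)}.Finite := by
  refine (finite_iUnion fun j => toFinite {(p j).1, (p j).1 - s}).subset ?_
  rintro ξ ⟨j, hj | hj, -⟩ <;> refine mem_iUnion.2 ⟨j, ?_⟩
  · simp [hj]
  · simp [hj]

noncomputable def edgeWeight {n : ℕ} (s : ℝ) (t : Fin (n + 1) → ℝ) (p : Fin (n + 1) → ℝ × ℝ)
    (i : Fin n) (x y : ℝ) : ℝ :=
  if (p i.castSucc).2 ∈ Icc y (y + s) then
    (t i.succ - t i.castSucc) / |(p i.succ).1 - (p i.castSucc).1| *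
      volume.real (uIcc (p i.castSucc).1 (p i.succ).1 ∩ Icc x (x + s))
  else 0

section Trajectory

variable {n : ℕ} {s : ℝ} {t : Fin (n + 1) → ℝ} {p : Fin (n + 1) → ℝ × ℝ} {T : ℝ → ℝ × ℝ}

theorem edgeWeight_nonneg (ht : Monotone t) (i : Fin n) (x y : ℝ) :
    0 ≤ edgeWeight s t p i x y := by
  unfold edgeWeight
  split_ifs
  · exact mul_nonneg (div_nonneg (sub_nonneg.2 (ht Fin.castSucc_lt_succ.le)) (abs_nonneg _))
      measureReal_nonneg
  · exact le_rfl

theorem edgeWeight_le_of_mem_Icc_imp (ht : Monotone t) {i : Fin n} {x y y' : ℝ}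
    (h : (p i.castSucc).2 ∈ Icc y (y + s) → (p i.castSucc).2 ∈ Icc y' (y' + s)) :
    edgeWeight s t p i x y ≤ edgeWeight s t p i x y' := by
  by_cases hy : (p i.castSucc).2 ∈ Icc y (y + s)
  · rw [edgeWeight, edgeWeight, if_pos hy, if_pos (h hy)]
  · rw [edgeWeight, if_neg hy]
    exact edgeWeight_nonneg ht i x y'

theorem edgeWeight_eq_zero {i : Fin n} {x y : ℝ}
    (h : (p i.castSucc).2 ∈ Icc y (y + s) →
      volume.real (uIcc (p i.castSucc).1 (p i.succ).1 ∩ Icc x (x + s)) = 0) :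
    edgeWeight s t p i x y = 0 := by
  unfold edgeWeight
  split_ifs with hy
  · rw [h hy, mul_zero]
  · rfl

theorem convexOn_edgeWeight (ht : Monotone t) {i : Fin n} (hhoriz : (p i.castSucc).2 = (p i.succ).2)
    {y c d : ℝ} (hgap : ∀ ξ, (∃ j, OnVerticalSide s ξ y (p j)) → ξ ∉ Ioo c d) :
    ConvexOn ℝ (Icc c d) fun x => edgeWeight s t p i x y := by
  unfold edgeWeight
  split_ifs with hy
  · have hmin := hgap (min (p i.castSucc).1 (p i.succ).1)
      ((min_choice (p i.castSucc).1 (p i.succ).1).elim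
        (fun h => ⟨i.castSucc, Or.inl h.symm, hy⟩) (fun h => ⟨i.succ, Or.inl h.symm, hhoriz ▸ hy⟩))
    have hmax := hgap (max (p i.castSucc).1 (p i.succ).1 - s)
      ((max_choice (p i.castSucc).1 (p i.succ).1).elim
        (fun h => ⟨i.castSucc, Or.inr (by rw [h]; ring), hy⟩)
        (fun h => ⟨i.succ, Or.inr (by rw [h]; ring), hhoriz ▸ hy⟩))
    exact (Real.convexOn_volume_real_uIcc_inter_Icc hmin hmax).smul
      (div_nonneg (sub_nonneg.2 (ht Fin.castSucc_lt_succ.le)) (abs_nonneg _))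
  · exact convexOn_const 0 (convex_Icc c d)

theorem Icc_inter_preimage_square {i : Fin n}
    (hT : ∀ τ ∈ Icc (t i.castSucc) (t i.succ),
      T τ = p i.castSucc +
        ((τ - t i.castSucc) / (t i.succ - t i.castSucc)) • (p i.succ - p i.castSucc))
    (hhoriz : (p i.castSucc).2 = (p i.succ).2) (x y : ℝ) :
    Icc (t i.castSucc) (t i.succ) ∩ T ⁻¹' Square s x y =
      if (p i.castSucc).2 ∈ Icc y (y + s) then
        Icc (t i.castSucc) (t i.succ) ∩ (fun τ => (p i.castSucc).1 +
          (τ - t i.castSucc) / (t i.succ - t i.castSucc) * ((p i.succ).1 - (p i.castSucc).1)) ⁻¹'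
            Icc x (x + s)
      else ∅ := by
  have hedge : EqOn T (fun τ => ((p i.castSucc).1 +
      (τ - t i.castSucc) / (t i.succ - t i.castSucc) * ((p i.succ).1 - (p i.castSucc).1),
      (p i.castSucc).2)) (Icc (t i.castSucc) (t i.succ)) := fun τ hτ => by
    rw [hT τ hτ]
    ext <;> simp [hhoriz]
  rw [hedge.inter_preimage_eq, Square, mk_preimage_prod, preimage_const]
  split_ifs <;> simp

theorem volume_Icc_inter_preimage_square (ht : StrictMono t) {i : Fin n}
    (hT : ∀ τ ∈ Icc (t i.castSucc) (t i.succ),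
      T τ = p i.castSucc +
        ((τ - t i.castSucc) / (t i.succ - t i.castSucc)) • (p i.succ - p i.castSucc))
    (hhoriz : (p i.castSucc).2 = (p i.succ).2) (hpos : (p i.castSucc).1 ≠ (p i.succ).1)
    (x y : ℝ) :
    volume (Icc (t i.castSucc) (t i.succ) ∩ T ⁻¹' Square s x y) =
      ENNReal.ofReal (edgeWeight s t p i x y) := by
  rw [Icc_inter_preimage_square hT hhoriz, edgeWeight]
  split_ifs
  · rw [Real.volume_Icc_inter_preimage_affine (ht Fin.castSucc_lt_succ) hpos,
      ENNReal.ofReal_mul (div_nonneg (sub_nonneg.2 (ht Fin.castSucc_lt_succ).le) (abs_nonneg _)),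
      measureReal_def, ENNReal.ofReal_toReal
        ((measure_mono inter_subset_right).trans_lt measure_Icc_lt_top).ne]
  · simp

theorem wgt_eq_ofReal_sum_edgeWeight (ht : StrictMono t)
    (hT : ∀ i : Fin n, ∀ τ ∈ Icc (t i.castSucc) (t i.succ),
      T τ = p i.castSucc +
        ((τ - t i.castSucc) / (t i.succ - t i.castSucc)) • (p i.succ - p i.castSucc))
    (hhoriz : ∀ i : Fin n, (p i.castSucc).2 = (p i.succ).2)
    (hpos : ∀ i : Fin n, (p i.castSucc).1 ≠ (p i.succ).1) (x y : ℝ) :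
    wgt s (t 0) (t (Fin.last n)) T x y = ENNReal.ofReal (∑ i, edgeWeight s t p i x y) := by
  rw [ENNReal.ofReal_sum_of_nonneg fun i _ => edgeWeight_nonneg ht.monotone i x y]
  refine (measure_Icc_inter_eq_sum ht.monotone (T ⁻¹' Square s x y) fun i => ?_).trans
    (Finset.sum_congr rfl fun i _ =>
      volume_Icc_inter_preimage_square ht (hT i) (hhoriz i) (hpos i) x y)
  rw [Icc_inter_preimage_square (hT i) (hhoriz i)]
  split_ifs
  · exact (measurableSet_Icc.inter
      ((by fun_prop : Continuous _).measurable measurableSet_Icc)).nullMeasurableSet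
  · exact nullMeasurableSet_empty

theorem exists_onVerticalSide_forall_le_sum_edgeWeight (ht : Monotone t)
    (hhoriz : ∀ i : Fin n, (p i.castSucc).2 = (p i.succ).2) {y : ℝ}
    (hy : ∃ j, (p j).2 ∈ Icc y (y + s)) :
    ∃ ξ, (∃ j, OnVerticalSide s ξ y (p j)) ∧
      ∀ x, ∑ i, edgeWeight s t p i x y ≤ ∑ i, edgeWeight s t p i ξ y := by
  set K := {ξ | ∃ j, OnVerticalSide s ξ y (p j)}
  have hK : ∀ j, (p j).2 ∈ Icc y (y + s) → (p j).1 ∈ K ∧ (p j).1 - s ∈ K :=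
    fun j hj => ⟨⟨j, Or.inl rfl, hj⟩, ⟨j, Or.inr (by ring), hj⟩⟩
  obtain ⟨j, hj⟩ := hy
  refine (finite_setOf_onVerticalSide s y p).exists_mem_forall_le_of_convexOn_gaps
    ⟨_, (hK j hj).1⟩ (fun c _ d _ hgap => convexOn_finset_sum (convex_Icc c d) _
      fun i _ => convexOn_edgeWeight ht (hhoriz i) hgap) (fun x hx => ?_) (fun x hx => ?_)
  · refine Finset.sum_eq_zero fun i _ => edgeWeight_eq_zero fun hi => ?_
    have h₁ := hx _ (hK _ hi).2
    have h₂ := hx _ (hK _ (hhoriz i ▸ hi)).2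
    exact Real.volume_real_uIcc_inter_Icc_eq_zero_of_add_le (by linarith) (by linarith)
  · exact Finset.sum_eq_zero fun i _ => edgeWeight_eq_zero fun hi =>
      Real.volume_real_uIcc_inter_Icc_eq_zero_of_le (hx _ (hK _ hi).1)
        (hx _ (hK _ (hhoriz i ▸ hi)).1)

theorem exists_vertex_forall_sum_edgeWeight_le (ht : Monotone t) (y : ℝ) :
    ∃ k, ∀ x, ∑ i, edgeWeight s t p i x y ≤ ∑ i, edgeWeight s t p i x (p k).2 := by
  -- raising the square to the lowest vertex it contains keeps every edge it contains
  obtain ⟨k, hk⟩ : ∃ k, ∀ j, (p j).2 ∈ Icc y (y + s) → (p j).2 ∈ Icc (p k).2 ((p k).2 + s) := by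
    by_cases hy : ∃ j, (p j).2 ∈ Icc y (y + s)
    · obtain ⟨k, hk, hmin⟩ := exists_min_image _ (fun j => (p j).2) (toFinite _) hy
      exact ⟨k, fun j hj => ⟨hmin j hj, by linarith [hj.2, hk.1]⟩⟩
    · exact ⟨0, fun j hj => absurd ⟨j, hj⟩ hy⟩
  exact ⟨k, fun x => Finset.sum_le_sum fun i _ => edgeWeight_le_of_mem_Icc_imp ht (hk _)⟩

end Trajectory

theorem hotspot_on_vertical_side_general
    (n : ℕ) (s : ℝ) (hs : 0 < s)
    (t : Fin (n + 1) → ℝ) (ht : StrictMono t)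
    (p : Fin (n + 1) → ℝ × ℝ)
    (T : ℝ → ℝ × ℝ)
    (hT : ∀ i : Fin n, ∀ τ ∈ Icc (t i.castSucc) (t i.succ),
      T τ = p i.castSucc +
        ((τ - t i.castSucc) / (t i.succ - t i.castSucc)) • (p i.succ - p i.castSucc))
    (hhoriz : ∀ i : Fin n, (p i.castSucc).2 = (p i.succ).2)
    (hpos : ∀ i : Fin n, (p i.castSucc).1 ≠ (p i.succ).1) :
    ∃ x y : ℝ, ∃ j : Fin (n + 1),
      wgt s (t 0) (t (Fin.last n)) T x y =
        (⨆ q : ℝ × ℝ, wgt s (t 0) (t (Fin.last n)) T q.1 q.2) ∧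
      ((p j).1 = x ∨ (p j).1 = x + s) ∧
      y ≤ (p j).2 ∧ (p j).2 ≤ y + s := by
  have hw := wgt_eq_ofReal_sum_edgeWeight (s := s) ht hT hhoriz hpos
  have hcand : (⋃ k, (·, (p k).2) '' {ξ | ∃ j, OnVerticalSide s ξ (p k).2 (p j)}).Finite :=
    finite_iUnion fun k => (finite_setOf_onVerticalSide s _ p).image _
  obtain ⟨_, hq, hmax⟩ := hcand.exists_mem_eq_iSup
    (f := fun q : ℝ × ℝ => wgt s (t 0) (t (Fin.last n)) T q.1 q.2) fun q => by
      obtain ⟨k, hk⟩ := exists_vertex_forall_sum_edgeWeight_le ht.monotone q.2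
      obtain ⟨ξ, hξ, hξmax⟩ := exists_onVerticalSide_forall_le_sum_edgeWeight ht.monotone hhoriz
        ⟨k, le_rfl, le_add_of_nonneg_right hs.le⟩
      refine ⟨(ξ, (p k).2), mem_iUnion.2 ⟨k, ξ, hξ, rfl⟩, ?_⟩
      simp only [hw]
      exact ENNReal.ofReal_le_ofReal ((hk q.1).trans (hξmax q.1))
  obtain ⟨k, ξ, ⟨j, hj⟩, rfl⟩ := mem_iUnion.1 hq
  exact ⟨ξ, (p k).2, j, hmax, hj⟩

theorem hotspot_on_vertical_side
    (n : ℕ) (hn : 1 ≤ n) (s : ℝ) (hs : 0 < s)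
    (t : Fin (n + 1) → ℝ) (ht : StrictMono t)
    (p : Fin (n + 1) → ℝ × ℝ)
    (T : ℝ → ℝ × ℝ)
    (hT : ∀ i : Fin n, ∀ τ ∈ Icc (t i.castSucc) (t i.succ),
      T τ = p i.castSucc +
        ((τ - t i.castSucc) / (t i.succ - t i.castSucc)) • (p i.succ - p i.castSucc))
    (hhoriz : ∀ i : Fin n, (p i.castSucc).2 = (p i.succ).2)
    (hpos : ∀ i : Fin n, (p i.castSucc).1 ≠ (p i.succ).1) :
    ∃ x y : ℝ, ∃ j : Fin (n + 1),
      wgt s (t 0) (t (Fin.last n)) T x y =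
        (⨆ q : ℝ × ℝ, wgt s (t 0) (t (Fin.last n)) T q.1 q.2) ∧
      ((p j).1 = x ∨ (p j).1 = x + s) ∧
      y ≤ (p j).2 ∧ (p j).2 ≤ y + s :=
  hotspot_on_vertical_side_general n s hs t ht p T hT hhoriz hpos
end

section
/- Let H be a horizontal trajectory with n ≥ 1 edges, each of positive length (i.e., (p_{i−1}).1 ≠ (p_i).1 for all 1 ≤ i ≤ n), and fix a side length s > 0. Then the supremum of w_H(a, b) over all squares Square(a, b) having a corner coinciding with a vertex of H — that is, over all j ∈ {0, …, n} and all (a, b) ∈ {((p_j).1, (p_j).2), ((p_j).1 − s, (p_j).2), ((p_j).1, (p_j).2 − s), ((p_j).1 − s, (p_j).2 − s)} — is at least h(H)/2. -/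
open MeasureTheory Set
open scoped ENNReal

/-!
All vertices of a horizontal trajectory lie on one line `y = c`, so a square meets the trajectory
only through the window `[x, x + s]` of its first coordinate, and the square with lower side on
`y = c` sees exactly the time the first coordinate spends in that window. On an edge from `a` to
`b` traversed in time `v - u`, this time is `(v - u) / |b - a|` times the length of
`[x, x + s] ∩ [[a, b]]`, which is `0` or `s` when no vertex lies in the window. Hence either some
vertex `v` lies in the window, which is then covered by the two corner windows `[v - s, v]` and
`[v, v + s]`; or no vertex does, and sliding the window up until its top meets the first vertex
above it does not decrease any edge's contribution.
-/

theorem preimage_affine_uIcc {u v a b : ℝ} (huv : u < v) (hab : a ≠ b) :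
    (fun τ => a + (τ - u) / (v - u) * (b - a)) ⁻¹' uIcc a b = Icc u v := by
  have hvu : v - u ≠ 0 := (sub_pos.2 huv).ne'
  have hba : b - a ≠ 0 := sub_ne_zero.2 hab.symm
  have : (fun τ => a + (τ - u) / (v - u) * (b - a)) =
      (a + ·) ∘ (· * (b - a)) ∘ (· / (v - u)) ∘ (· - u) := rfl
  rw [this, preimage_comp, preimage_comp, preimage_comp, preimage_const_add_uIcc,
    preimage_mul_const_uIcc hba, preimage_div_const_uIcc hvu, preimage_sub_const_uIcc, sub_self,
    zero_div, div_self hba, zero_mul, one_mul, zero_add, sub_add_cancel, uIcc_of_le huv.le]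

theorem volume_preimage_affine {u v a b : ℝ} (huv : u < v) (hab : a ≠ b) (J : Set ℝ) :
    volume ((fun τ => a + (τ - u) / (v - u) * (b - a)) ⁻¹' J) =
      ENNReal.ofReal ((v - u) / |b - a|) * volume J := by
  have hk : (b - a) / (v - u) ≠ 0 := div_ne_zero (sub_ne_zero.2 hab.symm) (sub_pos.2 huv).ne'
  have : (fun τ => a + (τ - u) / (v - u) * (b - a)) =
      (a - u * ((b - a) / (v - u)) + ·) ∘ ((b - a) / (v - u) * ·) := by
    ext τ
    simp only [Function.comp]
    ring
  rw [this, preimage_comp, Real.volume_preimage_mul_left hk, measure_preimage_add, inv_div,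
    abs_div, abs_of_pos (sub_pos.2 huv)]

theorem volume_Icc_inter_preimage_of_eqOn_affine {u v a b : ℝ} {g : ℝ → ℝ} (huv : u < v)
    (hab : a ≠ b) (hg : EqOn g (fun τ => a + (τ - u) / (v - u) * (b - a)) (Icc u v))
    (J : Set ℝ) :
    volume (Icc u v ∩ g ⁻¹' J) = ENNReal.ofReal ((v - u) / |b - a|) * volume (J ∩ uIcc a b) := by
  rw [hg.inter_preimage_eq, ← preimage_affine_uIcc huv hab, ← preimage_inter,
    volume_preimage_affine huv hab, inter_comm]

theorem restrict_Icc_eq_sum_restrict_Icc {n : ℕ} {t : Fin (n + 1) → ℝ} (ht : Monotone t) :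
    volume.restrict (Icc (t 0) (t (Fin.last n))) =
      ∑ i : Fin n, volume.restrict (Icc (t i.castSucc) (t i.succ)) := by
  induction n with
  | zero => simp
  | succ n ih =>
    have hnull : AEDisjoint volume (Icc (t 0) (t (Fin.last n).castSucc))
        (Icc (t (Fin.last n).castSucc) (t (Fin.last (n + 1)))) :=
      measure_mono_null (fun τ ⟨h₁, h₂⟩ => le_antisymm h₁.2 h₂.1)
        (measure_singleton (t (Fin.last n).castSucc))
    have hinit := ih (ht.comp Fin.strictMono_castSucc.monotone)
    simp only [Function.comp_apply, Fin.castSucc_zero, ← Fin.succ_castSucc] at hinit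
    rw [Fin.sum_univ_castSucc, ← hinit, Fin.succ_last,
      ← Measure.restrict_union₀ hnull measurableSet_Icc.nullMeasurableSet,
      Icc_union_Icc_eq_Icc (ht (Fin.zero_le _)) (ht (Fin.le_last _))]

theorem volume_Icc_inter_eq_sum {n : ℕ} {t : Fin (n + 1) → ℝ} (ht : Monotone t) (A : Set ℝ) :
    volume (Icc (t 0) (t (Fin.last n)) ∩ A) =
      ∑ i : Fin n, volume (Icc (t i.castSucc) (t i.succ) ∩ A) := by
  rw [inter_comm, ← Measure.restrict_apply' measurableSet_Icc,
    restrict_Icc_eq_sum_restrict_Icc ht, Measure.finsetSum_apply]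
  simp_rw [Measure.restrict_apply' measurableSet_Icc, inter_comm]

theorem measure_inter_preimage_Icc_le_add {α : Type*} [MeasurableSpace α] (μ : Measure α)
    (A : Set α) (g : α → ℝ) {x s v : ℝ} (hv : v ∈ Icc x (x + s)) :
    μ (A ∩ g ⁻¹' Icc x (x + s)) ≤
      μ (A ∩ g ⁻¹' Icc (v - s) (v - s + s)) + μ (A ∩ g ⁻¹' Icc v (v + s)) := by
  have hcover : Icc x (x + s) ⊆ Icc (v - s) (v - s + s) ∪ Icc v (v + s) := by
    rw [sub_add_cancel, Icc_union_Icc_eq_Icc (by linarith [hv.1, hv.2]) (by linarith [hv.1, hv.2])]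
    exact Icc_subset_Icc (by linarith [hv.2]) (by linarith [hv.1])
  refine (measure_mono ?_).trans (measure_union_le _ _)
  rw [← inter_union_distrib_left, ← preimage_union]
  exact inter_subset_inter_right _ (preimage_mono hcover)

theorem Icc_subset_uIcc_or_disjoint {x y a b : ℝ} (ha : a ∉ Icc x y) (hb : b ∉ Icc x y) :
    Icc x y ⊆ uIcc a b ∨ Disjoint (Icc x y) (uIcc a b) := by
  wlog hab : a ≤ b
  · rw [uIcc_comm]
    exact this hb ha (le_of_not_ge hab)
  rw [uIcc_of_le hab, or_iff_not_imp_right, not_disjoint_iff]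
  rintro ⟨z, hzx, hza⟩
  have hax : a < x := lt_of_not_ge fun h => ha ⟨h, hza.1.trans hzx.2⟩
  have hyb : y < b := lt_of_not_ge fun h => hb ⟨hzx.1.trans hza.2, h⟩
  exact Icc_subset_Icc hax.le hyb.le

theorem volume_Icc_inter_uIcc_le {x y x' y' a b : ℝ} (hlen : y - x = y' - x')
    (ha : a ∉ Icc x y) (hb : b ∉ Icc x y) (hslide : Icc x y ⊆ uIcc a b → Icc x' y' ⊆ uIcc a b) :
    volume (Icc x y ∩ uIcc a b) ≤ volume (Icc x' y' ∩ uIcc a b) := by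
  rcases Icc_subset_uIcc_or_disjoint ha hb with hsub | hdisj
  · rw [inter_eq_left.2 hsub, inter_eq_left.2 (hslide hsub), Real.volume_Icc, Real.volume_Icc,
      hlen]
  · rw [hdisj.inter_eq, measure_empty]
    exact zero_le

theorem exists_vertex_window_subset_uIcc {ι : Type*} [Finite ι] [Nonempty ι] (a : ι → ℝ) {x s : ℝ}
    (hs : 0 ≤ s) (ha : ∀ i, a i ∉ Icc x (x + s)) :
    ∃ j, ∀ i k, Icc x (x + s) ⊆ uIcc (a i) (a k) → Icc (a j - s) (a j) ⊆ uIcc (a i) (a k) := by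
  have hlt_or_gt : ∀ i, a i < x ∨ x + s < a i := by
    intro i
    by_contra! h
    exact ha i ⟨h.1, h.2⟩
  by_cases hup : ∃ i, x + s < a i
  · obtain ⟨j, hj, hmin⟩ := Set.exists_min_image {i | x + s < a i} a (Set.toFinite _) hup
    refine ⟨j, fun i k hsub => ?_⟩
    rw [uIcc, Icc_subset_Icc_iff (by linarith)] at hsub ⊢
    refine ⟨by linarith [hsub.1, hj.out], ?_⟩
    rcases max_choice (a i) (a k) with hmax | hmax <;> rw [hmax] at hsub ⊢
    · exact hmin i ((hlt_or_gt i).resolve_left (by linarith [hsub.2]))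
    · exact hmin k ((hlt_or_gt k).resolve_left (by linarith [hsub.2]))
  · push Not at hup
    have hlow : ∀ i, a i < x := fun i => (hlt_or_gt i).resolve_right (hup i).not_gt
    refine ⟨Classical.arbitrary ι, fun i k hsub => ?_⟩
    rcases mem_uIcc.1 (hsub (right_mem_Icc.2 (by linarith))) with h | h
    · linarith [hlow k, h.2]
    · linarith [hlow i, h.2]

section PiecewiseAffine

variable {n : ℕ} {t a : Fin (n + 1) → ℝ} {g : ℝ → ℝ}

theorem volume_Icc_inter_preimage_eq_sum (ht : StrictMono t)
    (ha : ∀ i : Fin n, a i.castSucc ≠ a i.succ)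
    (hg : ∀ i : Fin n, ∀ τ ∈ Icc (t i.castSucc) (t i.succ), g τ = a i.castSucc +
      (τ - t i.castSucc) / (t i.succ - t i.castSucc) * (a i.succ - a i.castSucc))
    (J : Set ℝ) :
    volume (Icc (t 0) (t (Fin.last n)) ∩ g ⁻¹' J) =
      ∑ i : Fin n, ENNReal.ofReal ((t i.succ - t i.castSucc) / |a i.succ - a i.castSucc|) *
        volume (J ∩ uIcc (a i.castSucc) (a i.succ)) := by
  rw [volume_Icc_inter_eq_sum ht.monotone]
  exact Finset.sum_congr rfl fun i _ => volume_Icc_inter_preimage_of_eqOn_affine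
    (ht Fin.castSucc_lt_succ) (ha i) (fun τ hτ => hg i τ hτ) J

theorem volume_Icc_inter_preimage_Icc_le_two_mul (ht : StrictMono t)
    (ha : ∀ i : Fin n, a i.castSucc ≠ a i.succ)
    (hg : ∀ i : Fin n, ∀ τ ∈ Icc (t i.castSucc) (t i.succ), g τ = a i.castSucc +
      (τ - t i.castSucc) / (t i.succ - t i.castSucc) * (a i.succ - a i.castSucc))
    {s : ℝ} (hs : 0 ≤ s) {S : ℝ≥0∞}
    (hS : ∀ j, ∀ x ∈ ({a j - s, a j} : Set ℝ),
      volume (Icc (t 0) (t (Fin.last n)) ∩ g ⁻¹' Icc x (x + s)) ≤ S) (x : ℝ) :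
    volume (Icc (t 0) (t (Fin.last n)) ∩ g ⁻¹' Icc x (x + s)) ≤ 2 * S := by
  by_cases hvertex : ∃ j, a j ∈ Icc x (x + s)
  · obtain ⟨j, hj⟩ := hvertex
    calc _ ≤ _ := measure_inter_preimage_Icc_le_add volume _ g hj
      _ ≤ S + S := add_le_add (hS j (a j - s) (by simp)) (hS j (a j) (by simp))
      _ = 2 * S := (two_mul S).symm
  · push Not at hvertex
    obtain ⟨j, hj⟩ := exists_vertex_window_subset_uIcc a hs hvertex
    calc _ = _ := volume_Icc_inter_preimage_eq_sum ht ha hg _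
      _ ≤ _ := Finset.sum_le_sum fun i _ => mul_le_mul_right (volume_Icc_inter_uIcc_le
          (x' := a j - s) (y' := a j - s + s) (by ring) (hvertex _) (hvertex _)
          (by simpa only [sub_add_cancel] using hj i.castSucc i.succ)) _
      _ = _ := (volume_Icc_inter_preimage_eq_sum ht ha hg _).symm
      _ ≤ S := hS j (a j - s) (by simp)
      _ ≤ 2 * S := le_mul_of_one_le_left' one_le_two

end PiecewiseAffine

theorem wgt_le_volume_fst_preimage (s t0 tn : ℝ) (T : ℝ → ℝ × ℝ) (x y : ℝ) :
    wgt s t0 tn T x y ≤ volume (Icc t0 tn ∩ (fun τ => (T τ).1) ⁻¹' Icc x (x + s)) :=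
  measure_mono (inter_subset_inter_right _ fun _ hτ => hτ.1)

theorem volume_fst_preimage_le_wgt {n : ℕ} {t : Fin (n + 1) → ℝ} (ht : Monotone t)
    {T : ℝ → ℝ × ℝ} {s c : ℝ} (hs : 0 ≤ s)
    (hc : ∀ i : Fin n, ∀ τ ∈ Icc (t i.castSucc) (t i.succ), (T τ).2 = c) (x : ℝ) :
    volume (Icc (t 0) (t (Fin.last n)) ∩ (fun τ => (T τ).1) ⁻¹' Icc x (x + s)) ≤
      wgt s (t 0) (t (Fin.last n)) T x c := by
  change _ ≤ volume (Icc _ _ ∩ T ⁻¹' Square s x c)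
  rw [volume_Icc_inter_eq_sum ht, volume_Icc_inter_eq_sum ht]
  refine Finset.sum_le_sum fun i _ => measure_mono fun τ ⟨hτ, hx⟩ => ⟨hτ, hx, ?_⟩
  rw [hc i τ hτ]
  exact ⟨le_rfl, by linarith⟩

theorem snd_eq_snd_zero_of_horizontal {n : ℕ} {p : Fin (n + 1) → ℝ × ℝ}
    (hhoriz : ∀ i : Fin n, (p i.castSucc).2 = (p i.succ).2) (j : Fin (n + 1)) :
    (p j).2 = (p 0).2 := by
  induction j using Fin.induction with
  | zero => rfl
  | succ i ih => rw [← hhoriz i, ih]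

theorem corner_squares_half_hotspot_general
    (n : ℕ) (s : ℝ) (hs : 0 < s)
    (t : Fin (n + 1) → ℝ) (ht : StrictMono t)
    (p : Fin (n + 1) → ℝ × ℝ)
    (T : ℝ → ℝ × ℝ)
    (hT : ∀ i : Fin n, ∀ τ ∈ Icc (t i.castSucc) (t i.succ),
      T τ = p i.castSucc +
        ((τ - t i.castSucc) / (t i.succ - t i.castSucc)) • (p i.succ - p i.castSucc))
    (hhoriz : ∀ i : Fin n, (p i.castSucc).2 = (p i.succ).2)
    (hpos : ∀ i : Fin n, (p i.castSucc).1 ≠ (p i.succ).1) :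
    (⨆ j : Fin (n + 1),
      ⨆ q ∈ ({((p j).1, (p j).2), ((p j).1 - s, (p j).2),
              ((p j).1, (p j).2 - s), ((p j).1 - s, (p j).2 - s)} : Set (ℝ × ℝ)),
        wgt s (t 0) (t (Fin.last n)) T q.1 q.2) ≥
      (⨆ q : ℝ × ℝ, wgt s (t 0) (t (Fin.last n)) T q.1 q.2) / 2 := by
  have hheight := snd_eq_snd_zero_of_horizontal hhoriz
  have hfst : ∀ i : Fin n, ∀ τ ∈ Icc (t i.castSucc) (t i.succ), (T τ).1 = (p i.castSucc).1 +
      (τ - t i.castSucc) / (t i.succ - t i.castSucc) * ((p i.succ).1 - (p i.castSucc).1) :=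
    fun i τ hτ => by simp [hT i τ hτ]
  have hsnd : ∀ i : Fin n, ∀ τ ∈ Icc (t i.castSucc) (t i.succ), (T τ).2 = (p 0).2 :=
    fun i τ hτ => by simp [hT i τ hτ, hheight]
  refine ENNReal.div_le_of_le_mul (iSup_le fun q => ?_)
  rw [mul_comm]
  refine (wgt_le_volume_fst_preimage s _ _ T q.1 q.2).trans
    (volume_Icc_inter_preimage_Icc_le_two_mul (a := fun j => (p j).1) ht hpos hfst hs.le
      (fun j x hx => (volume_fst_preimage_le_wgt ht.monotone hs.le hsnd x).trans ?_) q.1)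
  refine le_iSup_of_le j (le_iSup₂_of_le (x, (p 0).2) ?_ le_rfl)
  rw [← hheight j]
  rcases hx with rfl | rfl <;> simp

theorem corner_squares_half_hotspot
    (n : ℕ) (hn : 1 ≤ n) (s : ℝ) (hs : 0 < s)
    (t : Fin (n + 1) → ℝ) (ht : StrictMono t)
    (p : Fin (n + 1) → ℝ × ℝ)
    (T : ℝ → ℝ × ℝ)
    (hT : ∀ i : Fin n, ∀ τ ∈ Icc (t i.castSucc) (t i.succ),
      T τ = p i.castSucc +
        ((τ - t i.castSucc) / (t i.succ - t i.castSucc)) • (p i.succ - p i.castSucc))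
    (hhoriz : ∀ i : Fin n, (p i.castSucc).2 = (p i.succ).2)
    (hpos : ∀ i : Fin n, (p i.castSucc).1 ≠ (p i.succ).1) :
    (⨆ j : Fin (n + 1),
      ⨆ q ∈ ({((p j).1, (p j).2), ((p j).1 - s, (p j).2),
              ((p j).1, (p j).2 - s), ((p j).1 - s, (p j).2 - s)} : Set (ℝ × ℝ)),
        wgt s (t 0) (t (Fin.last n)) T q.1 q.2) ≥
      (⨆ q : ℝ × ℝ, wgt s (t 0) (t (Fin.last n)) T q.1 q.2) / 2 :=
  corner_squares_half_hotspot_general n s hs t ht p T hT hhoriz hpos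
end

section
/- Let T be an orthogonal trajectory with n ≥ 1 edges such that every edge is nondegenerate (p_{i−1} ≠ p_i for all 1 ≤ i ≤ n), and fix a side length s > 0. Then the supremum of w_T(a, b) over all squares Square(a, b) having a corner coinciding with a vertex of T — that is, over all j ∈ {0, …, n} and all (a, b) ∈ {((p_j).1, (p_j).2), ((p_j).1 − s, (p_j).2), ((p_j).1, (p_j).2 − s), ((p_j).1 − s, (p_j).2 − s)} — is at least h(T)/4. -/
open MeasureTheory Set
open scoped ENNReal

/-!
If the square `Q` contains a vertex `z`, then `Q` is covered by the four squares having `z` as a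
corner. Otherwise every edge meeting `Q` crosses it from one side to the opposite one. Push `Q`
along the horizontal axis until its right side reaches the nearest right endpoint `z` of a
horizontal crossing edge: each such edge still spans the pushed square, so it spends at least as
long in it, and the pushed square is covered by the two corner squares of `z` to its left. The
horizontal edges thus spend at most twice the corner maximum in `Q`, and by symmetry so do the
vertical ones.
-/

lemma iUnion_Ioc_castSucc_succ {α : Type*} [LinearOrder α] {n : ℕ} {t : Fin (n + 1) → α}
    (ht : Monotone t) :
    ⋃ i : Fin n, Ioc (t i.castSucc) (t i.succ) = Ioc (t 0) (t (Fin.last n)) := by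
  rw [← ht.biUnion_Ico_Ioc_map_succ 0 (Fin.last n)]
  ext τ
  simp only [mem_iUnion, mem_Ico, Fin.zero_le, true_and, exists_prop]
  constructor
  · rintro ⟨i, hi⟩
    exact ⟨i.castSucc, Fin.castSucc_lt_last i, by rwa [Fin.orderSucc_castSucc]⟩
  · rintro ⟨i, hi, hτ⟩
    obtain ⟨j, rfl⟩ := Fin.exists_castSucc_eq.2 hi.ne
    exact ⟨j, by rwa [Fin.orderSucc_castSucc] at hτ⟩

lemma pairwise_disjoint_Ioc_castSucc_succ {α : Type*} [Preorder α] {n : ℕ}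
    {t : Fin (n + 1) → α} (ht : Monotone t) :
    Pairwise (Function.onFun Disjoint fun i : Fin n => Ioc (t i.castSucc) (t i.succ)) := by
  intro i j hij
  simpa [Function.onFun, Fin.orderSucc_castSucc] using
    ht.pairwise_disjoint_on_Ioc_succ ((Fin.castSucc_injective n).ne hij)

lemma volume_Icc_inter_eq_sum_volume_Ioc_inter {n : ℕ} {t : Fin (n + 1) → ℝ} (ht : Monotone t)
    (A : Set ℝ) :
    volume (Icc (t 0) (t (Fin.last n)) ∩ A) =
      ∑ i : Fin n, volume (Ioc (t i.castSucc) (t i.succ) ∩ A) :=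
  calc volume (Icc (t 0) (t (Fin.last n)) ∩ A)
      = volume (Ioc (t 0) (t (Fin.last n)) ∩ A) :=
        measure_congr (Ioc_ae_eq_Icc.symm.inter (ae_eq_refl A))
    _ = volume.restrict (⋃ i : Fin n, Ioc (t i.castSucc) (t i.succ)) A := by
        rw [iUnion_Ioc_castSucc_succ ht, Measure.restrict_apply' measurableSet_Ioc, inter_comm]
    _ = _ := by
        rw [Measure.restrict_iUnion (pairwise_disjoint_Ioc_castSucc_succ ht)
          (fun _ => measurableSet_Ioc), Measure.sum_apply_of_countable, tsum_fintype]
        simp only [Measure.restrict_apply' measurableSet_Ioc, inter_comm]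

lemma volume_preimage_affine_s4 {k : ℝ} (hk : k ≠ 0) (α : ℝ) (E : Set ℝ) :
    volume ((fun τ => α + k * τ) ⁻¹' E) = ENNReal.ofReal |k⁻¹| * volume E := by
  change volume ((k * ·) ⁻¹' ((α + ·) ⁻¹' E)) = _
  rw [Real.volume_preimage_mul_left hk, measure_preimage_add]

lemma min_lt_and_lt_max_of_notMem_Icc {α : Type*} [LinearOrder α] {a b c c' w : α}
    (hc : c ∉ Icc a b) (hc' : c' ∉ Icc a b) (hw : w ∈ Icc a b)
    (hw' : w ∈ Icc (min c c') (max c c')) :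
    min c c' < a ∧ b < max c c' := by
  simp only [mem_Icc, not_and_or, not_le, min_le_iff, le_max_iff, min_lt_iff, lt_max_iff] at *
  grind

lemma sub_min_mul_sub_max {R : Type*} [CommRing R] [LinearOrder R] (x c c' : R) :
    (x - min c c') * (x - max c c') = (x - c) * (x - c') := by
  rcases le_total c c' with h | h <;> simp [h, mul_comm]

noncomputable def linearMotion (l u c c' τ : ℝ) : ℝ := c + (τ - l) / (u - l) * (c' - c)

section linearMotion

variable {l u c c' τ : ℝ}

lemma linearMotion_eq_affine :
    linearMotion l u c c' = fun τ => (c - (c' - c) / (u - l) * l) + (c' - c) / (u - l) * τ := by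
  ext τ; simp only [linearMotion]; ring

lemma linearMotion_sub_mul_sub (hlu : l ≠ u) :
    (linearMotion l u c c' τ - c) * (linearMotion l u c c' τ - c') =
      ((c' - c) / (u - l)) ^ 2 * ((τ - l) * (τ - u)) := by
  have : u - l ≠ 0 := sub_ne_zero.2 hlu.symm
  simp only [linearMotion]; field_simp; ring

lemma linearMotion_mem_Icc (hτ : τ ∈ Icc l u) :
    linearMotion l u c c' τ ∈ Icc (min c c') (max c c') := by
  rcases eq_or_ne l u with rfl | hlu
  · simp [linearMotion]
  rw [mem_Icc, ← sub_mul_sub_nonpos_iff _ min_le_max, sub_min_mul_sub_max,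
    linearMotion_sub_mul_sub hlu]
  exact mul_nonpos_of_nonneg_of_nonpos (sq_nonneg _)
    ((sub_mul_sub_nonpos_iff _ (hτ.1.trans hτ.2)).2 hτ)

lemma mem_Ioo_of_linearMotion_mem_Ioo (hlu : l < u)
    (h : linearMotion l u c c' τ ∈ Ioo (min c c') (max c c')) : τ ∈ Ioo l u := by
  rw [mem_Ioo, ← sub_mul_sub_neg_iff _ min_le_max, sub_min_mul_sub_max,
    linearMotion_sub_mul_sub hlu.ne] at h
  exact (sub_mul_sub_neg_iff _ hlu.le).1 (neg_of_mul_neg_right h (sq_nonneg _))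

lemma volume_preimage_linearMotion (hlu : l ≠ u) (hc : c ≠ c') (E : Set ℝ) :
    volume (linearMotion l u c c' ⁻¹' E) = ENNReal.ofReal |(u - l) / (c' - c)| * volume E := by
  have hk : (c' - c) / (u - l) ≠ 0 :=
    div_ne_zero (sub_ne_zero.2 hc.symm) (sub_ne_zero.2 hlu.symm)
  rw [linearMotion_eq_affine, volume_preimage_affine_s4 hk, inv_div]

lemma volume_Ioc_inter_preimage_linearMotion_le (hlu : l < u) (hc : c ≠ c') {A B A' B' : ℝ}
    (hA' : min c c' ≤ A') (hB' : B' ≤ max c c') (hlen : B - A ≤ B' - A') :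
    volume (Ioc l u ∩ linearMotion l u c c' ⁻¹' Icc A B) ≤
      volume (Ioc l u ∩ linearMotion l u c c' ⁻¹' Icc A' B') :=
  calc volume (Ioc l u ∩ linearMotion l u c c' ⁻¹' Icc A B)
      ≤ volume (linearMotion l u c c' ⁻¹' Icc A B) := measure_mono inter_subset_right
    _ ≤ volume (linearMotion l u c c' ⁻¹' Ioo A' B') := by
        rw [volume_preimage_linearMotion hlu.ne hc, volume_preimage_linearMotion hlu.ne hc,
          Real.volume_Icc, Real.volume_Ioo]
        gcongr
    _ ≤ volume (Ioc l u ∩ linearMotion l u c c' ⁻¹' Icc A' B') := by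
        refine measure_mono fun τ hτ => ⟨?_, Ioo_subset_Icc_self hτ⟩
        exact Ioo_subset_Ioc_self (mem_Ioo_of_linearMotion_mem_Ioo hlu
          ⟨hA'.trans_lt hτ.1, hτ.2.trans_le hB'⟩)

end linearMotion

-- Half-open windows, so that the edges partition `(t 0, t (Fin.last n)]`.
noncomputable def edgeTime {n : ℕ} (s : ℝ) (t : Fin (n + 1) → ℝ) (T : ℝ → ℝ × ℝ)
    (x y : ℝ) (i : Fin n) : Set ℝ :=
  {τ ∈ Ioc (t i.castSucc) (t i.succ) | T τ ∈ Square s x y}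

lemma wgt_eq_sum_edgeTime {n : ℕ} {s : ℝ} {t : Fin (n + 1) → ℝ} (ht : Monotone t)
    (T : ℝ → ℝ × ℝ) (x y : ℝ) :
    wgt s (t 0) (t (Fin.last n)) T x y = ∑ i, volume (edgeTime s t T x y i) :=
  volume_Icc_inter_eq_sum_volume_Ioc_inter ht _

def corners (s : ℝ) (z : ℝ × ℝ) : Set (ℝ × ℝ) :=
  {(z.1, z.2), (z.1 - s, z.2), (z.1, z.2 - s), (z.1 - s, z.2 - s)}

section Square

variable {s t₀ t₁ : ℝ} {T : ℝ → ℝ × ℝ}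

lemma Prod.swap_mem_Square {x y : ℝ} {z : ℝ × ℝ} :
    z.swap ∈ Square s y x ↔ z ∈ Square s x y := by
  simp only [Square, mem_prod, Prod.fst_swap, Prod.snd_swap, and_comm]

lemma Prod.swap_mem_corners {z q : ℝ × ℝ} :
    q.swap ∈ corners s z ↔ q ∈ corners s z.swap := by
  rcases q with ⟨a, b⟩
  simp only [corners, mem_insert_iff, mem_singleton_iff, Prod.swap_prod_mk, Prod.fst_swap,
    Prod.snd_swap, Prod.mk.injEq]
  tauto

lemma wgt_swap (x y : ℝ) : wgt s t₀ t₁ (Prod.swap ∘ T) y x = wgt s t₀ t₁ T x y := by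
  simp only [wgt, Function.comp_apply, Prod.swap_mem_Square]

lemma edgeTime_swap {n : ℕ} (t : Fin (n + 1) → ℝ) (x y : ℝ) (i : Fin n) :
    edgeTime s t (Prod.swap ∘ T) y x i = edgeTime s t T x y i := by
  simp only [edgeTime, Function.comp_apply, Prod.swap_mem_Square]

lemma wgt_le_add_of_subset {x y x₁ y₁ x₂ y₂ : ℝ}
    (h : Square s x y ⊆ Square s x₁ y₁ ∪ Square s x₂ y₂) :
    wgt s t₀ t₁ T x y ≤ wgt s t₀ t₁ T x₁ y₁ + wgt s t₀ t₁ T x₂ y₂ :=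
  calc wgt s t₀ t₁ T x y
      ≤ volume ({τ ∈ Icc t₀ t₁ | T τ ∈ Square s x₁ y₁} ∪
          {τ ∈ Icc t₀ t₁ | T τ ∈ Square s x₂ y₂}) :=
        measure_mono fun _ ⟨hτ, hT⟩ => (h hT).imp (⟨hτ, ·⟩) (⟨hτ, ·⟩)
    _ ≤ _ := measure_union_le _ _

lemma wgt_le_add_of_mem_Icc_fst {x y z : ℝ} (hz : z ∈ Icc x (x + s)) :
    wgt s t₀ t₁ T x y ≤ wgt s t₀ t₁ T (z - s) y + wgt s t₀ t₁ T z y := by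
  refine wgt_le_add_of_subset fun w ⟨hw, hw'⟩ => ?_
  rcases le_total w.1 z with h | h
  · exact Or.inl ⟨⟨by linarith [hz.2, hw.1], by linarith⟩, hw'⟩
  · exact Or.inr ⟨⟨h, by linarith [hz.1, hw.2]⟩, hw'⟩

lemma wgt_le_add_of_mem_Icc_snd {x y z : ℝ} (hz : z ∈ Icc y (y + s)) :
    wgt s t₀ t₁ T x y ≤ wgt s t₀ t₁ T x (z - s) + wgt s t₀ t₁ T x z := by
  refine wgt_le_add_of_subset fun w ⟨hw, hw'⟩ => ?_
  rcases le_total w.2 z with h | h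
  · exact Or.inl ⟨hw, ⟨by linarith [hz.2, hw'.1], by linarith⟩⟩
  · exact Or.inr ⟨hw, ⟨h, by linarith [hz.1, hw'.2]⟩⟩

variable {S : ℝ≥0∞} {z : ℝ × ℝ}
  (hS : ∀ q ∈ corners s z, wgt s t₀ t₁ T q.1 q.2 ≤ S)
include hS

lemma wgt_le_two_mul_of_mem_Icc_snd {x y : ℝ} (hx : x = z.1 - s ∨ x = z.1)
    (hz : z.2 ∈ Icc y (y + s)) : wgt s t₀ t₁ T x y ≤ 2 * S :=
  calc wgt s t₀ t₁ T x y ≤ wgt s t₀ t₁ T x (z.2 - s) + wgt s t₀ t₁ T x z.2 :=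
        wgt_le_add_of_mem_Icc_snd hz
    _ ≤ S + S := by
        gcongr <;> apply hS (x, _) <;> rcases hx with rfl | rfl <;> simp [corners]
    _ = 2 * S := (two_mul S).symm

lemma wgt_le_four_mul_of_mem {x y : ℝ} (hz : z ∈ Square s x y) :
    wgt s t₀ t₁ T x y ≤ 4 * S :=
  calc wgt s t₀ t₁ T x y ≤ wgt s t₀ t₁ T (z.1 - s) y + wgt s t₀ t₁ T z.1 y :=
        wgt_le_add_of_mem_Icc_fst hz.1
    _ ≤ 2 * S + 2 * S := add_le_add (wgt_le_two_mul_of_mem_Icc_snd hS (.inl rfl) hz.2)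
        (wgt_le_two_mul_of_mem_Icc_snd hS (.inr rfl) hz.2)
    _ = 4 * S := by ring

end Square

def IsTrajectory {n : ℕ} (t : Fin (n + 1) → ℝ) (p : Fin (n + 1) → ℝ × ℝ)
    (T : ℝ → ℝ × ℝ) : Prop :=
  ∀ i : Fin n, ∀ τ ∈ Icc (t i.castSucc) (t i.succ),
    T τ = p i.castSucc +
      ((τ - t i.castSucc) / (t i.succ - t i.castSucc)) • (p i.succ - p i.castSucc)

namespace IsTrajectory

variable {n : ℕ} {s : ℝ} {t : Fin (n + 1) → ℝ} {p : Fin (n + 1) → ℝ × ℝ}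
  {T : ℝ → ℝ × ℝ} (hT : IsTrajectory t p T)
include hT

lemma swap : IsTrajectory t (Prod.swap ∘ p) (Prod.swap ∘ T) := fun i τ hτ => by
  ext <;> simp [hT i τ hτ]

lemma fst_eq {i : Fin n} {τ : ℝ} (hτ : τ ∈ Icc (t i.castSucc) (t i.succ)) :
    (T τ).1 = linearMotion (t i.castSucc) (t i.succ) (p i.castSucc).1 (p i.succ).1 τ := by
  simp [hT i τ hτ, linearMotion]

lemma snd_eq_of_horizontal {i : Fin n} (hhor : (p i.castSucc).2 = (p i.succ).2) {τ : ℝ}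
    (hτ : τ ∈ Icc (t i.castSucc) (t i.succ)) : (T τ).2 = (p i.castSucc).2 := by
  simp [hT i τ hτ, ← hhor]

lemma edgeTime_eq_of_horizontal {i : Fin n} (hhor : (p i.castSucc).2 = (p i.succ).2)
    {x y : ℝ} (hy : (p i.castSucc).2 ∈ Icc y (y + s)) :
    edgeTime s t T x y i = Ioc (t i.castSucc) (t i.succ) ∩
      linearMotion (t i.castSucc) (t i.succ) (p i.castSucc).1 (p i.succ).1 ⁻¹'
        Icc x (x + s) := by
  ext τ
  refine and_congr_right fun hτ => ?_
  rw [mem_preimage, ← hT.fst_eq (Ioc_subset_Icc_self hτ)]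
  exact ⟨And.left,
    fun h => ⟨h, hT.snd_eq_of_horizontal hhor (Ioc_subset_Icc_self hτ) ▸ hy⟩⟩

lemma crossing_of_nonempty_edgeTime {i : Fin n} (hhor : (p i.castSucc).2 = (p i.succ).2)
    {x y : ℝ} (hl : p i.castSucc ∉ Square s x y) (hr : p i.succ ∉ Square s x y)
    (hne : (edgeTime s t T x y i).Nonempty) :
    (p i.castSucc).2 ∈ Icc y (y + s) ∧
      min (p i.castSucc).1 (p i.succ).1 < x ∧ x + s < max (p i.castSucc).1 (p i.succ).1 := by
  obtain ⟨τ, hτ, hx, hy⟩ := hne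
  rw [hT.snd_eq_of_horizontal hhor (Ioc_subset_Icc_self hτ)] at hy
  rw [hT.fst_eq (Ioc_subset_Icc_self hτ)] at hx
  exact ⟨hy, min_lt_and_lt_max_of_notMem_Icc (fun h => hl ⟨h, hy⟩)
    (fun h => hr ⟨h, hhor ▸ hy⟩) hx (linearMotion_mem_Icc (Ioc_subset_Icc_self hτ))⟩

lemma volume_edgeTime_le {i : Fin n} (ht : t i.castSucc < t i.succ)
    (hhor : (p i.castSucc).2 = (p i.succ).2) {x x' y : ℝ}
    (hy : (p i.castSucc).2 ∈ Icc y (y + s)) (hc : (p i.castSucc).1 ≠ (p i.succ).1)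
    (hx' : min (p i.castSucc).1 (p i.succ).1 ≤ x')
    (hx's : x' + s ≤ max (p i.castSucc).1 (p i.succ).1) :
    volume (edgeTime s t T x y i) ≤ volume (edgeTime s t T x' y i) := by
  rw [hT.edgeTime_eq_of_horizontal hhor hy, hT.edgeTime_eq_of_horizontal hhor hy]
  exact volume_Ioc_inter_preimage_linearMotion_le ht hc hx' hx's (by linarith)

lemma sum_volume_edgeTime_horizontal_le_two_mul (hs : 0 ≤ s) (ht : StrictMono t)
    {F : Finset (Fin n)} (hF : ∀ i ∈ F, (p i.castSucc).2 = (p i.succ).2) {x y : ℝ}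
    (hvtx : ∀ j, p j ∉ Square s x y) {S : ℝ≥0∞}
    (hS : ∀ j, ∀ q ∈ corners s (p j), wgt s (t 0) (t (Fin.last n)) T q.1 q.2 ≤ S) :
    ∑ i ∈ F, volume (edgeTime s t T x y i) ≤ 2 * S := by
  classical
  rw [← Finset.sum_filter_of_ne fun i _ h => nonempty_of_measure_ne_zero h]
  set H := F.filter fun i => (edgeTime s t T x y i).Nonempty
  have hcross (i) (hi : i ∈ H) := hT.crossing_of_nonempty_edgeTime
    (hF i (Finset.mem_filter.1 hi).1) (hvtx _) (hvtx _) (Finset.mem_filter.1 hi).2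
  rcases H.eq_empty_or_nonempty with hH | hH
  · simp [hH]
  obtain ⟨i₀, hi₀, hmin⟩ :=
    H.exists_min_image (fun i => max (p i.castSucc).1 (p i.succ).1) hH
  obtain ⟨j, hjx, hjy⟩ : ∃ j, (p j).1 = max (p i₀.castSucc).1 (p i₀.succ).1 ∧
      (p j).2 = (p i₀.castSucc).2 := by
    rcases le_total (p i₀.castSucc).1 (p i₀.succ).1 with h | h
    · exact ⟨i₀.succ, (max_eq_right h).symm, (hF i₀ (Finset.mem_filter.1 hi₀).1).symm⟩
    · exact ⟨i₀.castSucc, (max_eq_left h).symm, rfl⟩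
  calc ∑ i ∈ H, volume (edgeTime s t T x y i)
      ≤ ∑ i ∈ H, volume (edgeTime s t T ((p j).1 - s) y i) := by
        refine Finset.sum_le_sum fun i hi => ?_
        obtain ⟨hy, hmin_lt, hlt_max⟩ := hcross i hi
        have hc : (p i.castSucc).1 ≠ (p i.succ).1 := fun h => by
          rw [h, min_self] at hmin_lt; rw [h, max_self] at hlt_max; linarith
        refine hT.volume_edgeTime_le (ht Fin.castSucc_lt_succ) (hF i (Finset.mem_filter.1 hi).1)
          hy hc ?_ ?_
        · linarith [(hcross i₀ hi₀).2.2]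
        · linarith [hmin i hi]
    _ ≤ ∑ i, volume (edgeTime s t T ((p j).1 - s) y i) :=
        Finset.sum_le_sum_of_subset (Finset.subset_univ _)
    _ = wgt s (t 0) (t (Fin.last n)) T ((p j).1 - s) y :=
        (wgt_eq_sum_edgeTime ht.monotone T _ _).symm
    _ ≤ 2 * S := wgt_le_two_mul_of_mem_Icc_snd (hS j) (.inl rfl) (hjy ▸ (hcross i₀ hi₀).1)

end IsTrajectory

lemma wgt_le_four_mul_of_forall_notMem {n : ℕ} {s : ℝ} (hs : 0 ≤ s) {t : Fin (n + 1) → ℝ}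
    (ht : StrictMono t) {p : Fin (n + 1) → ℝ × ℝ} {T : ℝ → ℝ × ℝ}
    (hT : IsTrajectory t p T)
    (horth : ∀ i : Fin n, (p i.castSucc).1 = (p i.succ).1 ∨ (p i.castSucc).2 = (p i.succ).2)
    {x y : ℝ} (hvtx : ∀ j, p j ∉ Square s x y) {S : ℝ≥0∞}
    (hS : ∀ j, ∀ q ∈ corners s (p j), wgt s (t 0) (t (Fin.last n)) T q.1 q.2 ≤ S) :
    wgt s (t 0) (t (Fin.last n)) T x y ≤ 4 * S := by
  classical
  have hvtx' (j) : (Prod.swap ∘ p) j ∉ Square s y x := by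
    simpa only [Function.comp_apply, Prod.swap_mem_Square] using hvtx j
  have hS' (j) (q) (hq : q ∈ corners s ((Prod.swap ∘ p) j)) :
      wgt s (t 0) (t (Fin.last n)) (Prod.swap ∘ T) q.1 q.2 ≤ S := by
    rw [wgt_swap]
    exact hS j q.swap (Prod.swap_mem_corners.2 hq)
  have hvert : ∑ i ∈ Finset.univ.filter (fun i : Fin n => (p i.castSucc).2 ≠ (p i.succ).2),
      volume (edgeTime s t T x y i) ≤ 2 * S := by
    simp only [← edgeTime_swap t x y]
    exact hT.swap.sum_volume_edgeTime_horizontal_le_two_mul hs ht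
      (fun i hi => (horth i).resolve_right (Finset.mem_filter.1 hi).2) hvtx' hS'
  calc wgt s (t 0) (t (Fin.last n)) T x y = ∑ i, volume (edgeTime s t T x y i) :=
        wgt_eq_sum_edgeTime ht.monotone T x y
    _ = ∑ i ∈ Finset.univ.filter (fun i : Fin n => (p i.castSucc).2 = (p i.succ).2),
          volume (edgeTime s t T x y i) +
        ∑ i ∈ Finset.univ.filter (fun i : Fin n => (p i.castSucc).2 ≠ (p i.succ).2),
          volume (edgeTime s t T x y i) := (Finset.sum_filter_add_sum_filter_not _ _ _).symm
    _ ≤ 2 * S + 2 * S := add_le_add (hT.sum_volume_edgeTime_horizontal_le_two_mul hs ht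
          (fun i hi => (Finset.mem_filter.1 hi).2) hvtx hS) hvert
    _ = 4 * S := by ring

theorem corner_squares_quarter_hotspot_general
    (n : ℕ) (s : ℝ) (hs : 0 < s)
    (t : Fin (n + 1) → ℝ) (ht : StrictMono t)
    (p : Fin (n + 1) → ℝ × ℝ)
    (T : ℝ → ℝ × ℝ)
    (hT : ∀ i : Fin n, ∀ τ ∈ Icc (t i.castSucc) (t i.succ),
      T τ = p i.castSucc +
        ((τ - t i.castSucc) / (t i.succ - t i.castSucc)) • (p i.succ - p i.castSucc))
    (horth : ∀ i : Fin n,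
      (p i.castSucc).1 = (p i.succ).1 ∨ (p i.castSucc).2 = (p i.succ).2) :
    (⨆ j : Fin (n + 1),
      ⨆ q ∈ ({((p j).1, (p j).2), ((p j).1 - s, (p j).2),
              ((p j).1, (p j).2 - s), ((p j).1 - s, (p j).2 - s)} : Set (ℝ × ℝ)),
        wgt s (t 0) (t (Fin.last n)) T q.1 q.2) ≥
      (⨆ q : ℝ × ℝ, wgt s (t 0) (t (Fin.last n)) T q.1 q.2) / 4 := by
  have hS (j) (q) (hq : q ∈ corners s (p j)) : wgt s (t 0) (t (Fin.last n)) T q.1 q.2 ≤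
      ⨆ j, ⨆ q ∈ corners s (p j), wgt s (t 0) (t (Fin.last n)) T q.1 q.2 :=
    le_iSup_of_le j (le_iSup₂_of_le q hq le_rfl)
  refine ENNReal.div_le_of_le_mul (iSup_le fun q => ?_)
  rw [mul_comm]
  by_cases hvtx : ∃ j, p j ∈ Square s q.1 q.2
  · obtain ⟨j, hj⟩ := hvtx
    exact wgt_le_four_mul_of_mem (hS j) hj
  · exact wgt_le_four_mul_of_forall_notMem hs.le ht hT horth (not_exists.1 hvtx) hS

theorem corner_squares_quarter_hotspot
    (n : ℕ) (hn : 1 ≤ n) (s : ℝ) (hs : 0 < s)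
    (t : Fin (n + 1) → ℝ) (ht : StrictMono t)
    (p : Fin (n + 1) → ℝ × ℝ)
    (T : ℝ → ℝ × ℝ)
    (hT : ∀ i : Fin n, ∀ τ ∈ Icc (t i.castSucc) (t i.succ),
      T τ = p i.castSucc +
        ((τ - t i.castSucc) / (t i.succ - t i.castSucc)) • (p i.succ - p i.castSucc))
    (horth : ∀ i : Fin n,
      (p i.castSucc).1 = (p i.succ).1 ∨ (p i.castSucc).2 = (p i.succ).2)
    (hnd : ∀ i : Fin n, p i.castSucc ≠ p i.succ) :
    (⨆ j : Fin (n + 1),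
      ⨆ q ∈ ({((p j).1, (p j).2), ((p j).1 - s, (p j).2),
              ((p j).1, (p j).2 - s), ((p j).1 - s, (p j).2 - s)} : Set (ℝ × ℝ)),
        wgt s (t 0) (t (Fin.last n)) T q.1 q.2) ≥
      (⨆ q : ℝ × ℝ, wgt s (t 0) (t (Fin.last n)) T q.1 q.2) / 4 :=
  corner_squares_quarter_hotspot_general n s hs t ht p T hT horth
end

section
/- Let H be a horizontal trajectory with n edges and fix a side length s > 0. If (x, y) ∈ ℝ² is such that w_H(x, y) > 0, then there exists an index j ∈ {0, …, n} such that w_H(x, (p_j).2 − s) ≥ w_H(x, y); that is, there is a square of at least the same weight whose upper side has the same y-coordinate as a vertex of H. -/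
open MeasureTheory Set
open scoped ENNReal

/-! A horizontal trajectory only ever visits the heights of its vertices. Among the vertex heights
in `[y, y + s]` take the highest one, `h`; every visit of the strip `[y, y + s]` happens at a height
in `[y, h] ⊆ [h - s, h]`, so the square with upper side at height `h` is visited at least as long.
Ignoring the final instant (a null set) lets every remaining time lie on a half-open edge. -/

theorem Fin.exists_mem_Ico_castSucc_succ {α : Type*} [LinearOrder α] :
    ∀ {n : ℕ} (t : Fin (n + 1) → α) {τ : α}, τ ∈ Ico (t 0) (t (Fin.last n)) →
      ∃ i : Fin n, τ ∈ Ico (t i.castSucc) (t i.succ)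
  | 0, _, _, hτ => absurd hτ (by simp)
  | n + 1, t, τ, hτ => by
    by_cases hlt : τ < t (Fin.last n).castSucc
    · obtain ⟨i, hi⟩ := exists_mem_Ico_castSucc_succ (fun k => t k.castSucc) ⟨hτ.1, hlt⟩
      exact ⟨i.castSucc, hi⟩
    · exact ⟨Fin.last n, le_of_not_gt hlt, by simpa using hτ.2⟩

theorem exists_Icc_inter_range_subset {ι : Type*} [Finite ι] [Nonempty ι] (v : ι → ℝ)
    (y s : ℝ) : ∃ j, Icc y (y + s) ∩ range v ⊆ Icc (v j - s) (v j) := by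
  by_cases hne : (Icc y (y + s) ∩ range v).Nonempty
  · have hfin : (Icc y (y + s) ∩ range v).Finite := (finite_range v).inter_of_right _
    obtain ⟨_, ⟨hmax, j, rfl⟩, hj⟩ := Set.exists_max_image _ id hfin hne
    refine ⟨j, fun z hz => ⟨?_, hj z hz⟩⟩
    linarith [hmax.2, hz.1.1]
  · rw [not_nonempty_iff_eq_empty.mp hne]
    exact ⟨Classical.arbitrary ι, empty_subset _⟩

theorem measure_sep_Icc_mono_of_Ico {α : Type*} [LinearOrder α] [MeasurableSpace α]
    {μ : Measure α} [NullSingletonClass μ] {a b : α} {P Q : α → Prop}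
    (h : ∀ τ ∈ Ico a b, P τ → Q τ) :
    μ {τ ∈ Icc a b | P τ} ≤ μ {τ ∈ Icc a b | Q τ} :=
  measure_mono_ae <| (Measure.ae_ne μ b).mono fun _ hne ⟨hτ, hP⟩ =>
    ⟨hτ, h _ ⟨hτ.1, lt_of_le_of_ne hτ.2 hne⟩ hP⟩

theorem snd_mem_range_of_horizontal {n : ℕ} {t : Fin (n + 1) → ℝ} {p : Fin (n + 1) → ℝ × ℝ}
    {T : ℝ → ℝ × ℝ}
    (hT : ∀ i : Fin n, ∀ τ ∈ Icc (t i.castSucc) (t i.succ),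
      T τ = p i.castSucc +
        ((τ - t i.castSucc) / (t i.succ - t i.castSucc)) • (p i.succ - p i.castSucc))
    (hhoriz : ∀ i : Fin n, (p i.castSucc).2 = (p i.succ).2)
    {τ : ℝ} (hτ : τ ∈ Ico (t 0) (t (Fin.last n))) : (T τ).2 ∈ range fun i => (p i).2 := by
  obtain ⟨i, hi⟩ := Fin.exists_mem_Ico_castSucc_succ t hτ
  refine ⟨i.castSucc, ?_⟩
  simp [hT i τ (Ico_subset_Icc_self hi), ← hhoriz i]

theorem tracked_square_dominates_general
    (n : ℕ) (s : ℝ)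
    (t : Fin (n + 1) → ℝ)
    (p : Fin (n + 1) → ℝ × ℝ)
    (T : ℝ → ℝ × ℝ)
    (hT : ∀ i : Fin n, ∀ τ ∈ Icc (t i.castSucc) (t i.succ),
      T τ = p i.castSucc +
        ((τ - t i.castSucc) / (t i.succ - t i.castSucc)) • (p i.succ - p i.castSucc))
    (hhoriz : ∀ i : Fin n, (p i.castSucc).2 = (p i.succ).2)
    (x y : ℝ) :
    ∃ j : Fin (n + 1),
      wgt s (t 0) (t (Fin.last n)) T x ((p j).2 - s) ≥
        wgt s (t 0) (t (Fin.last n)) T x y := by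
  obtain ⟨j, hj⟩ := exists_Icc_inter_range_subset (fun i => (p i).2) y s
  refine ⟨j, measure_sep_Icc_mono_of_Ico fun τ hτ ⟨hx, hy⟩ => ⟨hx, ?_⟩⟩
  simpa using hj ⟨hy, snd_mem_range_of_horizontal hT hhoriz hτ⟩

theorem tracked_square_dominates
    (n : ℕ) (s : ℝ) (hs : 0 < s)
    (t : Fin (n + 1) → ℝ) (ht : StrictMono t)
    (p : Fin (n + 1) → ℝ × ℝ)
    (T : ℝ → ℝ × ℝ)
    (hT : ∀ i : Fin n, ∀ τ ∈ Icc (t i.castSucc) (t i.succ),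
      T τ = p i.castSucc +
        ((τ - t i.castSucc) / (t i.succ - t i.castSucc)) • (p i.succ - p i.castSucc))
    (hhoriz : ∀ i : Fin n, (p i.castSucc).2 = (p i.succ).2)
    (x y : ℝ) (hw : 0 < wgt s (t 0) (t (Fin.last n)) T x y) :
    ∃ j : Fin (n + 1),
      wgt s (t 0) (t (Fin.last n)) T x ((p j).2 - s) ≥
        wgt s (t 0) (t (Fin.last n)) T x y :=
  tracked_square_dominates_general n s t p T hT hhoriz x y
end

section
/- Let H be a horizontal trajectory with n edges and fix a side length s > 0. Then h(H) = sup over j ∈ {0, …, n} and x ∈ ℝ of w_H(x, (p_j).2 − s); that is, the maximum weight over all squares equals the supremum of the weights of the tracked squares, namely those whose upper side has the same y-coordinate as some vertex of H. -/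
open MeasureTheory Set
open scoped ENNReal

/-!
At every time after `t 0` a horizontal trajectory is at the height of some vertex (the instant
`t 0` itself is null, and `T (t 0)` is unconstrained when `n = 0`). Slide a square vertically
until its upper side reaches the highest vertex height inside it: every time spent in the old
square is still spent in the new one, because all heights visited there lie between that top
height and the bottom of the old square. If no vertex height lies in the square, its weight is 0.
-/

lemma exists_mem_Ioc_castSucc_succ {α : Type*} [LinearOrder α] {n : ℕ} (t : Fin (n + 1) → α)
    {a : α} (ha : a ∈ Ioc (t 0) (t (Fin.last n))) :
    ∃ i : Fin n, a ∈ Ioc (t i.castSucc) (t i.succ) := by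
  obtain ⟨k, hk, hmin⟩ := wellFounded_lt.has_min {k | a ≤ t k} ⟨_, ha.2⟩
  obtain ⟨i, rfl⟩ := Fin.eq_succ_of_ne_zero fun hk0 : k = 0 => (hk0 ▸ hk).not_gt ha.1
  exact ⟨i, lt_of_not_ge fun h => hmin _ h i.castSucc_lt_succ, hk⟩

lemma exists_forall_mem_Icc_imp_mem_Icc_sub {ι : Type*} [Finite ι] (g : ι → ℝ) {y s : ℝ}
    (hg : ∃ i, g i ∈ Icc y (y + s)) :
    ∃ j, ∀ i, g i ∈ Icc y (y + s) → g i ∈ Icc (g j - s) (g j) := by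
  obtain ⟨j, hj, hmax⟩ := Set.exists_max_image {i | g i ∈ Icc y (y + s)} g
    (Set.toFinite _) hg
  exact ⟨j, fun i hi => ⟨by linarith [hi.1, hj.2], hmax i hi⟩⟩

lemma wgt_eq_volume_Ioc (s t0 tn : ℝ) (T : ℝ → ℝ × ℝ) (x y : ℝ) :
    wgt s t0 tn T x y = volume {τ ∈ Ioc t0 tn | T τ ∈ Square s x y} :=
  measure_congr (Ioc_ae_eq_Icc.symm.inter (ae_eq_refl _))

lemma volume_mem_square_le_iSup_tracked {ι : Type*} [Finite ι] (g : ι → ℝ) {D : Set ℝ}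
    {T : ℝ → ℝ × ℝ} (hD : ∀ τ ∈ D, ∃ j, (T τ).2 = g j) (s x y : ℝ) :
    volume {τ ∈ D | T τ ∈ Square s x y} ≤
      ⨆ j, ⨆ x', volume {τ ∈ D | T τ ∈ Square s x' (g j - s)} := by
  by_cases hvisit : ∃ i, g i ∈ Icc y (y + s)
  · obtain ⟨j, hj⟩ := exists_forall_mem_Icc_imp_mem_Icc_sub g hvisit
    refine le_iSup₂_of_le j x (measure_mono ?_)
    rintro τ ⟨hτD, hτx, hτy⟩
    obtain ⟨i, hi⟩ := hD τ hτD
    rw [hi] at hτy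
    exact ⟨hτD, hτx, by simpa [hi] using hj i hτy⟩
  · have hempty : {τ ∈ D | T τ ∈ Square s x y} = ∅ := by
      refine eq_empty_of_forall_notMem fun τ ⟨hτD, _, hτy⟩ => ?_
      obtain ⟨i, hi⟩ := hD τ hτD
      exact hvisit ⟨i, hi ▸ hτy⟩
    simp [hempty]

lemma exists_snd_eq_of_horizontal {n : ℕ} {t : Fin (n + 1) → ℝ} {p : Fin (n + 1) → ℝ × ℝ}
    {T : ℝ → ℝ × ℝ}
    (hT : ∀ i : Fin n, ∀ τ ∈ Icc (t i.castSucc) (t i.succ),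
      T τ = p i.castSucc +
        ((τ - t i.castSucc) / (t i.succ - t i.castSucc)) • (p i.succ - p i.castSucc))
    (hhoriz : ∀ i : Fin n, (p i.castSucc).2 = (p i.succ).2)
    {τ : ℝ} (hτ : τ ∈ Ioc (t 0) (t (Fin.last n))) :
    ∃ j, (T τ).2 = (p j).2 := by
  obtain ⟨i, hi⟩ := exists_mem_Ioc_castSucc_succ t hτ
  exact ⟨i.castSucc, by simp [hT i τ (Ioc_subset_Icc_self hi), hhoriz i]⟩

theorem hotspot_eq_sup_tracked_squares_general
    (n : ℕ) (s : ℝ)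
    (t : Fin (n + 1) → ℝ)
    (p : Fin (n + 1) → ℝ × ℝ)
    (T : ℝ → ℝ × ℝ)
    (hT : ∀ i : Fin n, ∀ τ ∈ Icc (t i.castSucc) (t i.succ),
      T τ = p i.castSucc +
        ((τ - t i.castSucc) / (t i.succ - t i.castSucc)) • (p i.succ - p i.castSucc))
    (hhoriz : ∀ i : Fin n, (p i.castSucc).2 = (p i.succ).2) :
    (⨆ q : ℝ × ℝ, wgt s (t 0) (t (Fin.last n)) T q.1 q.2) =
      ⨆ j : Fin (n + 1), ⨆ x : ℝ,
        wgt s (t 0) (t (Fin.last n)) T x ((p j).2 - s) := by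
  refine le_antisymm (iSup_le fun q => ?_) (iSup₂_le fun j x => le_iSup_of_le (x, _) le_rfl)
  simp only [wgt_eq_volume_Ioc]
  exact volume_mem_square_le_iSup_tracked (fun j => (p j).2)
    (fun τ hτ => exists_snd_eq_of_horizontal hT hhoriz hτ) s q.1 q.2

theorem hotspot_eq_sup_tracked_squares
    (n : ℕ) (s : ℝ) (hs : 0 < s)
    (t : Fin (n + 1) → ℝ) (ht : StrictMono t)
    (p : Fin (n + 1) → ℝ × ℝ)
    (T : ℝ → ℝ × ℝ)
    (hT : ∀ i : Fin n, ∀ τ ∈ Icc (t i.castSucc) (t i.succ),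
      T τ = p i.castSucc +
        ((τ - t i.castSucc) / (t i.succ - t i.castSucc)) • (p i.succ - p i.castSucc))
    (hhoriz : ∀ i : Fin n, (p i.castSucc).2 = (p i.succ).2) :
    (⨆ q : ℝ × ℝ, wgt s (t 0) (t (Fin.last n)) T q.1 q.2) =
      ⨆ j : Fin (n + 1), ⨆ x : ℝ,
        wgt s (t 0) (t (Fin.last n)) T x ((p j).2 - s) :=
  hotspot_eq_sup_tracked_squares_general n s t p T hT hhoriz
end

section
/- Let T : [t_0, t_n] → ℝ² be any continuous map on a compact interval with t_0 < t_n, and fix a side length s > 0. Then the supremum h(T) = sup_{(x,y)∈ℝ²} w_T(x, y) is attained: there exists (x*, y*) ∈ ℝ² with w_T(x*, y*) = h(T); that is, a hotspot (a square of maximum weight) exists. -/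
open MeasureTheory Set
open scoped ENNReal

/-!
Let `ν` be the push-forward of Lebesgue measure on `[t0, tn]` under `T`: a finite measure
carried by the compact trace `T '' [t0, tn]`, and the weight of the square at `q` is
`ν (q +ᵥ [0, s]²)`. The `ν`-measure of the translates of a closed set is upper semicontinuous
(closed thickenings of a closed set shrink to it), and it vanishes unless `q` lies in the
compact set `trace - [0, s]²`. An upper semicontinuous function with compact support attains
its maximum.
-/

open Metric Pointwise

theorem UpperSemicontinuous.exists_forall_ge_of_hasCompactSupport {α β : Type*}
    [TopologicalSpace α] [Nonempty α] [LinearOrder β] [Zero β] {f : α → β}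
    (hf : UpperSemicontinuous f) (h : HasCompactSupport f) :
    ∃ x, ∀ y, f y ≤ f x := by
  by_cases hcov : ∃ z, z ∉ tsupport f
  · obtain ⟨z, hz⟩ := hcov
    obtain ⟨x, -, hx⟩ := (hf.upperSemicontinuousOn _).exists_isMaxOn (insert_nonempty z _)
      (h.insert z)
    refine ⟨x, fun y => ?_⟩
    by_cases hy : y ∈ tsupport f
    · exact hx (mem_insert_of_mem z hy)
    · rw [image_eq_zero_of_notMem_tsupport hy, ← image_eq_zero_of_notMem_tsupport hz]
      exact hx (mem_insert z _)
  · push Not at hcov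
    obtain ⟨x, -, hx⟩ := (hf.upperSemicontinuousOn _).exists_isMaxOn
      ⟨Classical.arbitrary α, hcov _⟩ h
    exact ⟨x, fun y => hx (hcov y)⟩

theorem vadd_subset_cthickening_vadd {E : Type*} [SeminormedAddCommGroup E] (p q : E)
    (K : Set E) : q +ᵥ K ⊆ cthickening (dist q p) (p +ᵥ K) := by
  rintro _ ⟨k, hk, rfl⟩
  exact mem_cthickening_of_dist_le _ (p + k) _ _ (vadd_mem_vadd_set hk) (by simp [dist_eq_norm])

theorem upperSemicontinuous_measure_vadd {E : Type*} [SeminormedAddCommGroup E]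
    [MeasurableSpace E] [OpensMeasurableSpace E] {μ : Measure E} [IsFiniteMeasure μ]
    {K : Set E} (hK : IsClosed K) : UpperSemicontinuous fun q : E => μ (q +ᵥ K) := by
  intro p c hc
  have hlim := tendsto_measure_cthickening_of_isClosed (μ := μ)
    ⟨1, one_pos, measure_ne_top μ _⟩ (hK.vadd p)
  obtain ⟨δ, hδc, hδ⟩ := ((hlim.eventually (gt_mem_nhds hc)).filter_mono nhdsWithin_le_nhds
    |>.and (self_mem_nhdsWithin (s := Ioi 0))).exists
  filter_upwards [ball_mem_nhds p hδ] with q hq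
  exact (measure_mono ((vadd_subset_cthickening_vadd p q K).trans
    (cthickening_mono hq.le _))).trans_lt hδc

theorem hasCompactSupport_measure_vadd {E : Type*} [SeminormedAddCommGroup E]
    [MeasurableSpace E] {μ : Measure E} {K L : Set E} (hL : IsCompact L) (hμL : μ Lᶜ = 0)
    (hK : IsCompact K) : HasCompactSupport fun q : E => μ (q +ᵥ K) := by
  refine HasCompactSupport.intro (hL.add hK.neg) fun q hq => measure_mono_null ?_ hμL
  rintro _ ⟨k, hk, rfl⟩ hqk
  exact hq ⟨q +ᵥ k, hqk, -k, neg_mem_neg.2 hk, by simp⟩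

theorem MeasureTheory.Measure.map_restrict_compl_image_eq_zero {α β : Type*}
    [MeasurableSpace α] [MeasurableSpace β] {μ : Measure α} {f : α → β} {s : Set α}
    (hf : AEMeasurable f (μ.restrict s)) (hs : MeasurableSet s) (hfs : MeasurableSet (f '' s)) :
    (μ.restrict s).map f (f '' s)ᶜ = 0 := by
  rw [Measure.map_apply_of_aemeasurable hf hfs.compl, Measure.restrict_apply' hs]
  exact measure_mono_null (fun τ ⟨hτ, hτs⟩ => hτ ⟨τ, hτs, rfl⟩) measure_empty

theorem isCompact_square (s x y : ℝ) : IsCompact (Square s x y) :=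
  isCompact_Icc.prod isCompact_Icc

theorem square_eq_vadd (s x y : ℝ) : Square s x y = (x, y) +ᵥ Square s 0 0 := by
  ext ⟨a, b⟩
  simp only [Square, mem_vadd_set_iff_neg_vadd_mem, mem_prod, mem_Icc, Prod.neg_mk,
    vadd_eq_add, Prod.mk_add_mk, zero_add]
  constructor <;> rintro ⟨⟨h1, h2⟩, h3, h4⟩ <;> refine ⟨⟨?_, ?_⟩, ?_, ?_⟩ <;> linarith

theorem wgt_eq_map_restrict_apply {s t0 tn : ℝ} {T : ℝ → ℝ × ℝ}
    (hT : ContinuousOn T (Icc t0 tn)) (x y : ℝ) :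
    wgt s t0 tn T x y = (volume.restrict (Icc t0 tn)).map T (Square s x y) := by
  rw [Measure.map_apply_of_aemeasurable (hT.aemeasurable measurableSet_Icc)
    (isCompact_square s x y).isClosed.measurableSet, Measure.restrict_apply' measurableSet_Icc,
    inter_comm]
  rfl

theorem hotspot_exists_general
    (t0 tn : ℝ) (s : ℝ)
    (T : ℝ → ℝ × ℝ) (hT : ContinuousOn T (Icc t0 tn)) :
    ∃ q : ℝ × ℝ, wgt s t0 tn T q.1 q.2 = ⨆ r : ℝ × ℝ, wgt s t0 tn T r.1 r.2 := by
  set ν := (volume.restrict (Icc t0 tn)).map T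
  have hw (q : ℝ × ℝ) : wgt s t0 tn T q.1 q.2 = ν (q +ᵥ Square s 0 0) := by
    rw [wgt_eq_map_restrict_apply hT, ← square_eq_vadd]
  have hL := isCompact_Icc.image_of_continuousOn hT
  have hνL : ν (T '' Icc t0 tn)ᶜ = 0 := Measure.map_restrict_compl_image_eq_zero
    (hT.aemeasurable measurableSet_Icc) measurableSet_Icc hL.isClosed.measurableSet
  have hK := isCompact_square s 0 0
  obtain ⟨q, hq⟩ := (upperSemicontinuous_measure_vadd (μ := ν) hK.isClosed)
    |>.exists_forall_ge_of_hasCompactSupport (hasCompactSupport_measure_vadd hL hνL hK)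
  exact ⟨q, le_antisymm (le_iSup_of_le q le_rfl) (iSup_le fun r => by simpa only [hw] using hq r)⟩

theorem hotspot_exists
    (t0 tn : ℝ) (htt : t0 < tn) (s : ℝ) (hs : 0 < s)
    (T : ℝ → ℝ × ℝ) (hT : ContinuousOn T (Icc t0 tn)) :
    ∃ q : ℝ × ℝ, wgt s t0 tn T q.1 q.2 = ⨆ r : ℝ × ℝ, wgt s t0 tn T r.1 r.2 :=
  hotspot_exists_general t0 tn s T hT
end
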